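/- For every odd nonzero integer n and every integer k, the operators on W satisfy α_n ψ̃_k − ψ̃_k α_n = ψ̃_{k−n} (this is the coefficient-wise form of the relation [α_n, ψ(z)] = z^n ψ(z) for the generating function ψ(z) = ∑_{k∈ℤ} z^k ψ̃_k). -/

import Mathlib

open scoped BigOperators

noncomputable section

/-- `W`, the real vector space with basis `{v_S}` indexed by finite subsets of `ℤ_{>0}`. -/
abbrev W : Type := Finset ℕ+ →₀ ℝ

/-- the basis vector `v_S` -/
def vS (S : Finset ℕ+) : W := Finsupp.single S 1

/-- the vacuum vector `v_∅` -/
def vac : W := vS ∅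

/-- extend values on basis vectors to a linear map -/
def onBasis (f : Finset ℕ+ → W) : W →ₗ[ℝ] W := Finsupp.lift W ℝ (Finset ℕ+) f

/-- `ψ_k v_S = (-1)^{#{s ∈ S : s > k}} v_{S ∪ {k}}` if `k ∉ S`, else `0`. -/
def psi (k : ℕ+) : W →ₗ[ℝ] W :=
  onBasis fun S =>
    if k ∈ S then 0
    else ((-1 : ℝ) ^ ((S.filter (fun s => k < s)).card)) • vS (insert k S)

/-- `ψ*_k v_S = (1/2)(-1)^{#{s ∈ S : s > k}} v_{S \ {k}}` if `k ∈ S`, else `0`. -/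
def psiStar (k : ℕ+) : W →ₗ[ℝ] W :=
  onBasis fun S =>
    if k ∈ S then ((2 : ℝ)⁻¹ * (-1 : ℝ) ^ ((S.filter (fun s => k < s)).card)) • vS (S.erase k)
    else 0

/-- the parity operator `Π v_S = (-1)^{|S|} v_S`. -/
def par : W →ₗ[ℝ] W := onBasis fun S => ((-1 : ℝ) ^ S.card) • vS S

/-- `α_n = 2 ∑_{j≥1} ψ_j ψ*_{n+j} + Π ψ*_n + 2 ∑_{j=1}^{(n-1)/2} (-1)^j ψ*_j ψ*_{n-j}`
for odd `n ≥ 1` (on each basis vector the first sum has finitely many nonzero terms: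
only `j` with `n + j ∈ S` contribute). -/
def alphaP (n : ℕ+) : W →ₗ[ℝ] W :=
  onBasis fun S =>
    (2 : ℝ) • (∑ s ∈ S.filter (fun s => n < s), psi (s - n) (psiStar s (vS S)))
      + par (psiStar n (vS S))
      + (2 : ℝ) • (∑ j ∈ Finset.Icc 1 (((n : ℕ) - 1) / 2),
          ((-1 : ℝ) ^ j) • psiStar j.toPNat' (psiStar ((n : ℕ) - j).toPNat' (vS S)))

/-- `α_{-n} = 2 ∑_{j≥1} ψ_{n+j} ψ*_j + ψ_n Π + 2 ∑_{j=1}^{(n-1)/2} (-1)^j ψ_{n-j} ψ_j`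
for odd `n ≥ 1` (only `j ∈ S` contribute to the first sum). -/
def alphaM (n : ℕ+) : W →ₗ[ℝ] W :=
  onBasis fun S =>
    (2 : ℝ) • (∑ s ∈ S, psi (n + s) (psiStar s (vS S)))
      + psi n (par (vS S))
      + (2 : ℝ) • (∑ j ∈ Finset.Icc 1 (((n : ℕ) - 1) / 2),
          ((-1 : ℝ) ^ j) • psi ((n : ℕ) - j).toPNat' (psi j.toPNat' (vS S)))

/-- `α_n` for a (nonzero odd) integer `n`. -/
def alpha (n : ℤ) : W →ₗ[ℝ] W :=
  if 0 < n then alphaP n.toNat.toPNat' else if n < 0 then alphaM (-n).toNat.toPNat' else 0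

/-- `ψ̃_k`: `ψ_k` for `k ≥ 1`, `Π/2` for `k = 0`, `(-1)^k ψ*_{-k}` for `k ≤ -1`. -/
def psiT (k : ℤ) : W →ₗ[ℝ] W :=
  if 0 < k then psi k.toNat.toPNat'
  else if k = 0 then (2 : ℝ)⁻¹ • par
  else ((-1 : ℝ) ^ k) • psiStar (-k).toNat.toPNat'

/-- the inner product on `W` with `⟨v_S, v_T⟩ = δ_{S,T} 2^{-|S|}`. -/
def innerW (f g : W) : ℝ := f.sum fun S a => a * g S * (2 : ℝ)⁻¹ ^ S.card

/-!
For odd `n`, on each basis vector `v_S` the operator `α_n` agrees with the normal-ordered quadratic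
expression `∑_{j ≥ (1-n)/2} -2 (-1)^j ψ̃_j ψ̃_{-n-j}` truncated at any `M` beyond the support of `v_S`:
the terms beyond it contain an annihilator `ψ̃_{-m}` with `m ∉ S`. The `ψ̃_k` satisfy the canonical
anticommutation relations `ψ̃_i ψ̃_j + ψ̃_j ψ̃_i = δ_{i+j,0} (-1)^i / 2`, hence
`[ψ̃_a ψ̃_b, ψ̃_k] = ψ̃_a {ψ̃_b, ψ̃_k} - {ψ̃_a, ψ̃_k} ψ̃_b`. In the truncated sum exactly one of the two
indices `j = k - n` and `j = -k` occurs (they add up to the odd number `-n`), and it contributes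
`ψ̃_{k-n}`.
-/

def aboveSign (k : ℕ+) (S : Finset ℕ+) : ℝ := (-1) ^ (S.filter (fun s => k < s)).card

lemma onBasis_vS (f : Finset ℕ+ → W) (S : Finset ℕ+) : onBasis f (vS S) = f S := by
  simp [onBasis, vS]

lemma psi_vS (k : ℕ+) (S : Finset ℕ+) :
    psi k (vS S) = if k ∈ S then 0 else aboveSign k S • vS (insert k S) := by
  simp [psi, onBasis_vS, aboveSign]

lemma psiStar_vS (k : ℕ+) (S : Finset ℕ+) :
    psiStar k (vS S) = if k ∈ S then (2⁻¹ * aboveSign k S) • vS (S.erase k) else 0 := by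
  simp [psiStar, onBasis_vS, aboveSign]

lemma par_vS (S : Finset ℕ+) : par (vS S) = (-1 : ℝ) ^ S.card • vS S := by
  simp [par, onBasis_vS]

lemma ext_vS {f g : W →ₗ[ℝ] W} (h : ∀ S, f (vS S) = g (vS S)) : f = g :=
  Finsupp.lhom_ext' fun S => LinearMap.ext_ring (h S)

lemma aboveSign_insert {a : ℕ+} {S : Finset ℕ+} (ha : a ∉ S) (b : ℕ+) :
    aboveSign b (insert a S) = (if b < a then -1 else 1) * aboveSign b S := by
  unfold aboveSign
  rw [Finset.filter_insert]
  split_ifs with h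
  · rw [Finset.card_insert_of_notMem fun h' => ha (Finset.mem_filter.1 h').1, pow_succ, mul_comm]
  · rw [one_mul]

lemma aboveSign_erase {a : ℕ+} {S : Finset ℕ+} (ha : a ∈ S) (b : ℕ+) :
    aboveSign b (S.erase a) = (if b < a then -1 else 1) * aboveSign b S := by
  conv_rhs => rw [← Finset.insert_erase ha, aboveSign_insert (Finset.notMem_erase a S)]
  split_ifs <;> ring

lemma aboveSign_mul_self (k : ℕ+) (S : Finset ℕ+) : aboveSign k S * aboveSign k S = 1 := by
  rw [aboveSign, ← pow_add, ← two_mul, pow_mul]; norm_num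

lemma ite_lt_add_ite_lt {a b : ℕ+} (hab : a ≠ b) :
    (if a < b then -1 else 1 : ℝ) + (if b < a then -1 else 1) = 0 := by
  rcases hab.lt_or_gt with h | h <;> simp [h, h.not_gt]

lemma psi_comp_psi_add (a b : ℕ+) : psi a ∘ₗ psi b + psi b ∘ₗ psi a = 0 := by
  refine ext_vS fun S => ?_
  obtain rfl | hab := eq_or_ne a b
  · by_cases ha : a ∈ S <;> simp [psi_vS, ha]
  by_cases ha : a ∈ S
  · by_cases hb : b ∈ S <;> simp [psi_vS, ha, hb]
  by_cases hb : b ∈ S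
  · simp [psi_vS, ha, hb]
  simp only [LinearMap.add_apply, LinearMap.comp_apply, LinearMap.zero_apply, psi_vS, ha, hb,
    if_false, map_smul, Finset.mem_insert, hab, hab.symm, or_self, aboveSign_insert ha,
    aboveSign_insert hb, smul_smul, Finset.insert_comm a b, ← add_smul]
  exact smul_eq_zero_of_left
    (by linear_combination aboveSign a S * aboveSign b S * ite_lt_add_ite_lt hab) _

lemma psiStar_comp_psiStar_add (a b : ℕ+) :
    psiStar a ∘ₗ psiStar b + psiStar b ∘ₗ psiStar a = 0 := by
  refine ext_vS fun S => ?_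
  obtain rfl | hab := eq_or_ne a b
  · by_cases ha : a ∈ S <;> simp [psiStar_vS, ha]
  by_cases ha : a ∈ S; swap
  · by_cases hb : b ∈ S <;> simp [psiStar_vS, ha, hb]
  by_cases hb : b ∈ S; swap
  · simp [psiStar_vS, ha, hb]
  simp only [LinearMap.add_apply, LinearMap.comp_apply, LinearMap.zero_apply, psiStar_vS, ha, hb,
    if_true, map_smul, Finset.mem_erase, ne_eq, hab, hab.symm, not_false_eq_true, true_and,
    aboveSign_erase ha, aboveSign_erase hb, smul_smul, Finset.erase_right_comm (a := a),
    ← add_smul]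
  exact smul_eq_zero_of_left
    (by linear_combination (4⁻¹ : ℝ) * aboveSign a S * aboveSign b S * ite_lt_add_ite_lt hab) _

lemma psi_comp_psiStar_add (a b : ℕ+) :
    psi a ∘ₗ psiStar b + psiStar b ∘ₗ psi a
      = if a = b then (2 : ℝ)⁻¹ • LinearMap.id else 0 := by
  refine ext_vS fun S => ?_
  obtain rfl | hab := eq_or_ne a b
  · by_cases ha : a ∈ S <;>
      simp [psi_vS, psiStar_vS, ha, aboveSign_insert, aboveSign_erase, smul_smul, mul_assoc,
        mul_left_comm _ (2⁻¹ : ℝ), aboveSign_mul_self]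
  by_cases ha : a ∈ S
  · by_cases hb : b ∈ S <;> simp [psi_vS, psiStar_vS, ha, hb, hab]
  by_cases hb : b ∈ S; swap
  · simp [psi_vS, psiStar_vS, ha, hb, hab, Ne.symm hab]
  simp only [LinearMap.add_apply, LinearMap.comp_apply, LinearMap.zero_apply, psi_vS, psiStar_vS,
    ha, hb, hab, if_true, if_false, map_smul, Finset.mem_erase, Finset.mem_insert, hab.symm,
    ne_eq, not_false_eq_true, true_and, false_or, aboveSign_erase hb, aboveSign_insert ha,
    smul_smul, Finset.erase_insert_of_ne hab, ← add_smul]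
  exact smul_eq_zero_of_left
    (by linear_combination (2⁻¹ : ℝ) * aboveSign a S * aboveSign b S * ite_lt_add_ite_lt hab) _

lemma par_comp_psi_add (a : ℕ+) : par ∘ₗ psi a + psi a ∘ₗ par = 0 := by
  refine ext_vS fun S => ?_
  by_cases ha : a ∈ S
  · simp [psi_vS, par_vS, ha]
  simp only [LinearMap.add_apply, LinearMap.comp_apply, LinearMap.zero_apply, psi_vS, par_vS, ha,
    if_false, map_smul, Finset.card_insert_of_notMem ha, pow_succ, smul_smul, ← add_smul]
  exact smul_eq_zero_of_left (by ring) _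

lemma par_comp_psiStar_add (a : ℕ+) : par ∘ₗ psiStar a + psiStar a ∘ₗ par = 0 := by
  refine ext_vS fun S => ?_
  by_cases ha : a ∈ S; swap
  · simp [psiStar_vS, par_vS, ha]
  obtain ⟨T, haT, rfl⟩ : ∃ T, a ∉ T ∧ S = insert a T :=
    ⟨S.erase a, Finset.notMem_erase a S, (Finset.insert_erase ha).symm⟩
  simp only [LinearMap.add_apply, LinearMap.comp_apply, LinearMap.zero_apply, psiStar_vS, par_vS,
    Finset.mem_insert_self, if_true, map_smul, Finset.erase_insert haT,
    Finset.card_insert_of_notMem haT, pow_succ, smul_smul, ← add_smul]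
  exact smul_eq_zero_of_left (by ring) _

lemma par_comp_par : par ∘ₗ par = LinearMap.id := by
  refine ext_vS fun S => ?_
  rw [LinearMap.comp_apply, par_vS, map_smul, par_vS, smul_smul, ← mul_pow]
  norm_num

lemma Int.eq_zero_or_eq_pnat_or_eq_neg_pnat (k : ℤ) :
    k = 0 ∨ ∃ p : ℕ+, k = p ∨ k = -p := by
  rcases Int.eq_nat_or_neg k with ⟨m, rfl | rfl⟩ <;> rcases Nat.eq_zero_or_pos m with rfl | hm
  · exact .inl rfl
  · exact .inr ⟨⟨m, hm⟩, .inl rfl⟩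
  · exact .inl rfl
  · exact .inr ⟨⟨m, hm⟩, .inr rfl⟩

lemma psiT_pnat (p : ℕ+) : psiT p = psi p := by
  simp [psiT]

lemma psiT_zero : psiT 0 = (2 : ℝ)⁻¹ • par := by
  simp [psiT]

lemma psiT_neg_pnat (p : ℕ+) : psiT (-p) = (-1 : ℝ) ^ (p : ℕ) • psiStar p := by
  have hp : ¬ (p : ℤ) < 0 := not_lt.2 (Int.natCast_nonneg _)
  simp [psiT, hp, ← inv_pow]

lemma psiT_natCast {i : ℕ} (hi : 0 < i) : psiT i = psi i.toPNat' := by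
  simpa [PNat.toPNat'_coe hi] using psiT_pnat i.toPNat'

lemma psiT_neg_natCast {i : ℕ} (hi : 0 < i) :
    psiT (-i) = (-1 : ℝ) ^ i • psiStar i.toPNat' := by
  simpa [PNat.toPNat'_coe hi] using psiT_neg_pnat i.toPNat'

lemma smul_comp_smul_add {R M : Type*} [CommSemiring R] [AddCommMonoid M] [Module R M]
    (c d : R) (f g : M →ₗ[R] M) :
    (c • f) ∘ₗ (d • g) + (d • g) ∘ₗ (c • f)
      = (c * d) • (f ∘ₗ g + g ∘ₗ f) := by
  simp only [LinearMap.comp_smul, LinearMap.smul_comp, smul_smul, smul_add, mul_comm d]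

lemma psiT_comp_psiT_neg_add (p q : ℕ+) :
    psiT p ∘ₗ psiT (-q) + psiT (-q) ∘ₗ psiT p
      = if p = q then ((-1 : ℝ) ^ (p : ℕ) * 2⁻¹) • LinearMap.id else 0 := by
  rw [psiT_pnat, psiT_neg_pnat, ← one_smul ℝ (psi p), smul_comp_smul_add, one_mul,
    psi_comp_psiStar_add]
  split_ifs with h
  · rw [h, smul_smul]
  · rw [smul_zero]

lemma psiT_comp_psiT_add (i j : ℤ) :
    psiT i ∘ₗ psiT j + psiT j ∘ₗ psiT i
      = if i + j = 0 then ((-1 : ℝ) ^ i * 2⁻¹) • LinearMap.id else 0 := by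
  rcases Int.eq_zero_or_eq_pnat_or_eq_neg_pnat i with rfl | ⟨p, rfl | rfl⟩ <;>
  rcases Int.eq_zero_or_eq_pnat_or_eq_neg_pnat j with rfl | ⟨q, rfl | rfl⟩
  · rw [psiT_zero, smul_comp_smul_add, par_comp_par, add_zero, if_pos rfl, zpow_zero,
      one_mul]
    module
  · rw [psiT_zero, psiT_pnat, ← one_smul ℝ (psi q), smul_comp_smul_add, par_comp_psi_add,
      smul_zero, if_neg (by simp)]
  · rw [psiT_zero, psiT_neg_pnat, smul_comp_smul_add, par_comp_psiStar_add, smul_zero,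
      if_neg (by simp)]
  · rw [psiT_zero, psiT_pnat, ← one_smul ℝ (psi p), smul_comp_smul_add, add_comm,
      par_comp_psi_add, smul_zero, if_neg (by simp)]
  · rw [psiT_pnat, psiT_pnat, psi_comp_psi_add, if_neg (by positivity)]
  · rw [psiT_comp_psiT_neg_add]
    simp [add_neg_eq_zero]
  · rw [psiT_zero, psiT_neg_pnat, smul_comp_smul_add, add_comm, par_comp_psiStar_add,
      smul_zero, if_neg (by simp)]
  · rw [add_comm, psiT_comp_psiT_neg_add]
    rcases eq_or_ne q p with rfl | h
    · simp [← inv_pow]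
    · simp [neg_add_eq_zero, h, h.symm]
  · rw [psiT_neg_pnat, psiT_neg_pnat, smul_comp_smul_add, psiStar_comp_psiStar_add, smul_zero,
      if_neg (by have := p.pos; have := q.pos; omega)]

lemma comp_comp_sub_comp_comp {R M : Type*} [CommRing R] [AddCommGroup M] [Module R M]
    (a b c : M →ₗ[R] M) :
    (a ∘ₗ b) ∘ₗ c - c ∘ₗ (a ∘ₗ b)
      = a ∘ₗ (b ∘ₗ c + c ∘ₗ b) - (a ∘ₗ c + c ∘ₗ a) ∘ₗ b := by
  simp only [LinearMap.comp_add, LinearMap.add_comp, LinearMap.comp_assoc]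
  abel

lemma psiT_comp_psiT_comm (a b k : ℤ) :
    (psiT a ∘ₗ psiT b) ∘ₗ psiT k - psiT k ∘ₗ (psiT a ∘ₗ psiT b)
      = (if b + k = 0 then (-1 : ℝ) ^ b * 2⁻¹ else 0) • psiT a
        - (if a + k = 0 then (-1 : ℝ) ^ a * 2⁻¹ else 0) • psiT b := by
  rw [comp_comp_sub_comp_comp, psiT_comp_psiT_add, psiT_comp_psiT_add]
  refine LinearMap.ext fun x => ?_
  split_ifs <;> simp

lemma neg_one_zpow_neg (j : ℤ) : (-1 : ℝ) ^ (-j) = (-1) ^ j := by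
  rw [zpow_neg, ← inv_zpow, inv_neg_one]

lemma neg_one_zpow_mul_self (j : ℤ) : (-1 : ℝ) ^ j * (-1) ^ j = 1 := by
  rw [← mul_zpow]; norm_num

lemma neg_one_zpow_mul_neg_one_zpow_of_odd {a b : ℤ} (h : Odd (a + b)) :
    (-1 : ℝ) ^ a * (-1) ^ b = -1 := by
  rw [← zpow_add₀ (by norm_num), h.neg_one_zpow]

/-- Normal-ordered form of `α_n`, truncated at `M`: as `j` runs over `j ≥ (1 - n) / 2`, the pair
`(j, -n - j)` runs over the unordered pairs of indices summing to `-n` exactly once. -/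
def alphaTrunc (n M : ℤ) : W →ₗ[ℝ] W :=
  ∑ j ∈ Finset.Icc ((1 - n) / 2) M, (-2 * (-1 : ℝ) ^ j) • (psiT j ∘ₗ psiT (-n - j))

lemma alphaTrunc_apply (n M : ℤ) (x : W) :
    alphaTrunc n M x
      = ∑ j ∈ Finset.Icc ((1 - n) / 2) M,
          (-2 * (-1 : ℝ) ^ j) • psiT j (psiT (-n - j) x) := by
  simp [alphaTrunc, LinearMap.sum_apply]

lemma smul_psiT_comp_psiT_comm {n : ℤ} (hn : Odd n) (j k : ℤ) :
    (-2 * (-1 : ℝ) ^ j) •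
        ((psiT j ∘ₗ psiT (-n - j)) ∘ₗ psiT k - psiT k ∘ₗ (psiT j ∘ₗ psiT (-n - j)))
      = ((if j = k - n then 1 else 0) + (if j = -k then 1 else 0) : ℝ) • psiT (k - n) := by
  rw [psiT_comp_psiT_comm]
  refine LinearMap.ext fun x => ?_
  simp only [LinearMap.smul_apply, LinearMap.sub_apply, smul_sub, smul_smul]
  by_cases h₁ : j = k - n
  · have h₂ : j ≠ -k := by rintro rfl; obtain ⟨m, rfl⟩ := hn; omega
    subst h₁
    rw [if_pos (by ring), if_neg (by omega), if_pos rfl, if_neg h₂]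
    have := neg_one_zpow_mul_neg_one_zpow_of_odd (a := k - n) (b := -n - (k - n))
      (by simpa using hn.neg)
    simp only [mul_zero, zero_smul, sub_zero, add_zero]
    congr 1
    linear_combination (-1 : ℝ) * this
  · by_cases h₂ : j = -k
    · subst h₂
      rw [if_neg (by omega), if_pos (by ring), if_neg h₁, if_pos rfl,
        show -n - -k = k - n by ring]
      simp only [mul_zero, zero_smul, zero_sub, zero_add, ← neg_smul]
      congr 1
      linear_combination neg_one_zpow_mul_self (-k)
    · rw [if_neg (by omega), if_neg (by omega), if_neg h₁, if_neg h₂]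
      simp

lemma alphaTrunc_comp_psiT_sub {n M k : ℤ} (hn : Odd n) (h₁ : k - n ≤ M) (h₂ : -k ≤ M) :
    alphaTrunc n M ∘ₗ psiT k - psiT k ∘ₗ alphaTrunc n M = psiT (k - n) := by
  refine LinearMap.ext fun x => ?_
  have (j : ℤ) := congr($(smul_psiT_comp_psiT_comm hn j k) x)
  simp only [LinearMap.smul_apply, LinearMap.sub_apply, LinearMap.comp_apply] at this
  simp only [alphaTrunc, LinearMap.sub_apply, LinearMap.comp_apply, LinearMap.sum_apply,
    map_sum, LinearMap.smul_apply, map_smul, ← Finset.sum_sub_distrib,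
    ← smul_sub, this, ← Finset.sum_smul, Finset.sum_add_distrib, Finset.sum_ite_eq',
    Finset.mem_Icc]
  obtain ⟨m, rfl⟩ := hn
  rw [show (1 - (2 * m + 1)) / 2 = -m by omega]
  split_ifs <;> first | omega | simp

lemma sum_Icc_int_split {M : Type*} [AddCommMonoid M] (f : ℤ → M) {a b c : ℤ}
    (hab : a ≤ b + 1) (hbc : b ≤ c) :
    ∑ j ∈ Finset.Icc a c, f j
      = ∑ j ∈ Finset.Icc a b, f j + ∑ j ∈ Finset.Icc (b + 1) c, f j := by
  rw [← Finset.sum_union]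
  · congr 1; ext j; simp only [Finset.mem_union, Finset.mem_Icc]; omega
  · refine Finset.disjoint_left.2 fun j h₁ h₂ => ?_
    simp only [Finset.mem_Icc] at h₁ h₂
    omega

lemma sum_Icc_nat_eq_sum_Icc_int_sub {M : Type*} [AddCommMonoid M] (f : ℤ → M) (c : ℤ)
    (a b : ℕ) :
    ∑ i ∈ Finset.Icc a b, f (c - i) = ∑ j ∈ Finset.Icc (c - b) (c - a), f j := by
  refine Finset.sum_nbij' (fun i => c - i) (fun j => (c - j).toNat) ?_ ?_ ?_ ?_ fun _ _ => rfl <;>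
    intro i hi <;> simp only [Finset.mem_Icc] at hi ⊢ <;> omega

lemma psiT_neg_vS_of_notMem {m : ℤ} (hm : 0 < m) {S : Finset ℕ+}
    (hS : ∀ s ∈ S, (s : ℤ) ≠ m) : psiT (-m) (vS S) = 0 := by
  lift m to ℕ using hm.le
  rw [psiT_neg_natCast (by omega), LinearMap.smul_apply, psiStar_vS, if_neg, smul_zero]
  exact fun h => hS _ h (by simp [PNat.toPNat'_coe (show 0 < m by omega)])

lemma sum_Icc_psiT_neg_vS (F : ℤ → W →ₗ[ℝ] W) {S : Finset ℕ+} {a b c : ℤ}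
    (hac : 0 < a + c) (hS : ∀ s ∈ S, (s : ℤ) ≤ b + c) :
    ∑ j ∈ Finset.Icc a b, F j (psiT (-(c + j)) (vS S))
      = ∑ s ∈ S.filter (fun s : ℕ+ => a + c ≤ (s : ℤ)), F (s - c) (psiT (-s) (vS S)) := by
  set T := S.filter fun s : ℕ+ => a + c ≤ (s : ℤ)
  have hinj : Set.InjOn (fun s : ℕ+ => (s : ℤ) - c) T := by
    intro s _ t _ h; simpa using h
  have hsub : T.image (fun s : ℕ+ => (s : ℤ) - c) ⊆ Finset.Icc a b := by
    intro j hj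
    obtain ⟨s, hs, rfl⟩ := Finset.mem_image.1 hj
    have := hS s (Finset.mem_filter.1 hs).1
    simp only [T, Finset.mem_filter] at hs
    simp only [Finset.mem_Icc]; omega
  rw [← Finset.sum_subset hsub, Finset.sum_image hinj]
  · simp only [add_sub_cancel]
  · intro j hj hjT
    simp only [Finset.mem_Icc] at hj
    rw [psiT_neg_vS_of_notMem (by omega), map_zero]
    intro s hs hsj
    exact hjT (Finset.mem_image.2 ⟨s, Finset.mem_filter.2 ⟨hs, by omega⟩, by omega⟩)

lemma alpha_pnat (p : ℕ+) : alpha p = alphaP p := by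
  simp [alpha]

lemma alphaTrunc_pnat_head {p : ℕ+} (hp : Odd (p : ℕ)) (x : W) :
    ∑ j ∈ Finset.Icc ((1 - (p : ℤ)) / 2) (-1),
        (-2 * (-1 : ℝ) ^ j) • psiT j (psiT (-p - j) x)
      = (2 : ℝ) • ∑ i ∈ Finset.Icc 1 (((p : ℕ) - 1) / 2),
          (-1 : ℝ) ^ i • psiStar i.toPNat' (psiStar ((p : ℕ) - i).toPNat' x) := by
  obtain ⟨m, hm⟩ := hp
  rw [show ((1 : ℤ) - p) / 2 = 0 - (((p : ℕ) - 1) / 2 : ℕ) by omega,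
    show (-1 : ℤ) = 0 - ((1 : ℕ) : ℤ) by norm_num, ← sum_Icc_nat_eq_sum_Icc_int_sub,
    Finset.smul_sum]
  refine Finset.sum_congr rfl fun i hi => ?_
  simp only [Finset.mem_Icc] at hi
  rw [zero_sub, show -(p : ℤ) - -i = -(((p : ℕ) - i : ℕ) : ℤ) by omega,
    psiT_neg_natCast (by omega), psiT_neg_natCast (by omega)]
  simp only [LinearMap.smul_apply, map_smul, smul_smul]
  congr 1
  have : (-1 : ℝ) ^ ((p : ℕ) - i) * (-1) ^ i = -1 := by
    rw [← pow_add, Nat.sub_add_cancel (by omega), hm, Odd.neg_one_pow ⟨m, rfl⟩]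
  rw [neg_one_zpow_neg, zpow_natCast]
  linear_combination (-2 * (-1 : ℝ) ^ i) * this

lemma alphaTrunc_pnat_middle {p : ℕ+} (hp : Odd (p : ℕ)) (x : W) :
    (-2 : ℝ) • psiT 0 (psiT (-p) x) = par (psiStar p x) := by
  rw [psiT_zero, psiT_neg_pnat, Odd.neg_one_pow hp]
  simp only [LinearMap.smul_apply, map_smul, smul_smul]
  norm_num

lemma alphaTrunc_pnat_tail {p : ℕ+} (hp : Odd (p : ℕ)) {M : ℤ} {S : Finset ℕ+}
    (hS : ∀ s ∈ S, (s : ℤ) ≤ M + p) :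
    ∑ j ∈ Finset.Icc 1 M, (-2 * (-1 : ℝ) ^ j) • psiT j (psiT (-p - j) (vS S))
      = (2 : ℝ) • ∑ s ∈ S.filter (fun s => p < s), psi (s - p) (psiStar s (vS S)) := by
  have := sum_Icc_psiT_neg_vS (fun j => (-2 * (-1 : ℝ) ^ j) • psiT j) (c := p) (a := 1) (b := M)
    (by positivity) hS
  simp only [LinearMap.smul_apply, neg_add'] at this
  rw [this, Finset.smul_sum]
  refine Finset.sum_congr (Finset.filter_congr fun s _ => ?_) fun s hs => ?_
  · rw [← PNat.coe_lt_coe]; omega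
  have hps : (p : ℕ) < s := (Finset.mem_filter.1 hs).2
  have hsp : psiT ((s : ℤ) - p) = psi (s - p) := by
    rw [← psiT_pnat, PNat.sub_coe, if_pos (PNat.coe_lt_coe _ _ |>.1 hps)]; congr 1; omega
  rw [hsp, psiT_neg_pnat, LinearMap.smul_apply, map_smul, smul_smul, ← zpow_natCast]
  congr 1
  obtain ⟨m, hm⟩ := hp
  linear_combination (-2 : ℝ) * neg_one_zpow_mul_neg_one_zpow_of_odd (a := (s : ℤ) - p) (b := s)
    ⟨s - m - 1, by omega⟩

lemma alphaP_vS_eq_alphaTrunc {p : ℕ+} (hp : Odd (p : ℕ)) {M : ℤ} (hM : 0 ≤ M)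
    {S : Finset ℕ+} (hS : ∀ s ∈ S, (s : ℤ) ≤ M + p) :
    alphaP p (vS S) = alphaTrunc p M (vS S) := by
  rw [alphaTrunc_apply, sum_Icc_int_split _ (b := -1) (by omega) (by omega),
    sum_Icc_int_split _ (b := 0) (by omega) hM]
  simp only [neg_add_cancel, zero_add, Finset.Icc_self, Finset.sum_singleton, zpow_zero, mul_one,
    sub_zero]
  rw [alphaP, onBasis_vS, alphaTrunc_pnat_head hp, alphaTrunc_pnat_middle hp,
    alphaTrunc_pnat_tail hp hS]
  abel

lemma alpha_neg_pnat (p : ℕ+) : alpha (-p) = alphaM p := by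
  simp [alpha]

lemma alphaTrunc_neg_pnat_head {p : ℕ+} (hp : Odd (p : ℕ)) (x : W) :
    ∑ j ∈ Finset.Icc ((1 + (p : ℤ)) / 2) (p - 1),
        (-2 * (-1 : ℝ) ^ j) • psiT j (psiT (p - j) x)
      = (2 : ℝ) • ∑ i ∈ Finset.Icc 1 (((p : ℕ) - 1) / 2),
          (-1 : ℝ) ^ i • psi ((p : ℕ) - i).toPNat' (psi i.toPNat' x) := by
  obtain ⟨m, hm⟩ := hp
  rw [show (1 + (p : ℤ)) / 2 = p - (((p : ℕ) - 1) / 2 : ℕ) by omega,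
    show (p : ℤ) - 1 = p - ((1 : ℕ) : ℤ) by norm_num, ← sum_Icc_nat_eq_sum_Icc_int_sub,
    Finset.smul_sum]
  refine Finset.sum_congr rfl fun i hi => ?_
  simp only [Finset.mem_Icc] at hi
  rw [sub_sub_cancel, show (p : ℤ) - i = (((p : ℕ) - i : ℕ) : ℤ) by omega,
    psiT_natCast (by omega), psiT_natCast (by omega), smul_smul]
  congr 1
  have : (-1 : ℝ) ^ ((p : ℕ) - i) * (-1) ^ i = -1 := by
    rw [← pow_add, Nat.sub_add_cancel (by omega), hm, Odd.neg_one_pow ⟨m, rfl⟩]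
  have hsq : (-1 : ℝ) ^ i * (-1) ^ i = 1 := by rw [← mul_pow]; norm_num
  rw [zpow_natCast]
  linear_combination (-2 * (-1 : ℝ) ^ i) * this + (2 * (-1 : ℝ) ^ ((p : ℕ) - i)) * hsq

lemma alphaTrunc_neg_pnat_middle {p : ℕ+} (hp : Odd (p : ℕ)) (x : W) :
    (-2 * (-1 : ℝ) ^ (p : ℤ)) • psiT p (psiT 0 x) = psi p (par x) := by
  rw [psiT_zero, psiT_pnat, zpow_natCast, Odd.neg_one_pow hp]
  simp only [LinearMap.smul_apply, map_smul, smul_smul]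
  norm_num

lemma alphaTrunc_neg_pnat_tail {p : ℕ+} (hp : Odd (p : ℕ)) {M : ℤ} {S : Finset ℕ+}
    (hS : ∀ s ∈ S, (s : ℤ) + p ≤ M) :
    ∑ j ∈ Finset.Icc ((p : ℤ) + 1) M, (-2 * (-1 : ℝ) ^ j) • psiT j (psiT (p - j) (vS S))
      = (2 : ℝ) • ∑ s ∈ S, psi (p + s) (psiStar s (vS S)) := by
  have := sum_Icc_psiT_neg_vS (fun j => (-2 * (-1 : ℝ) ^ j) • psiT j) (c := -p) (a := p + 1)
    (b := M) (by omega) fun s hs => by have := hS s hs; omega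
  simp only [LinearMap.smul_apply, neg_add', neg_neg] at this
  rw [this, Finset.filter_true_of_mem fun s _ => by have := s.pos; omega, Finset.smul_sum]
  refine Finset.sum_congr rfl fun s _ => ?_
  rw [show (s : ℤ) - -p = ((p + s : ℕ+) : ℤ) by simp [add_comm], psiT_pnat, psiT_neg_pnat,
    LinearMap.smul_apply, map_smul, smul_smul, ← zpow_natCast, PNat.add_coe]
  congr 1
  obtain ⟨m, hm⟩ := hp
  push_cast
  linear_combination (-2 : ℝ) * neg_one_zpow_mul_neg_one_zpow_of_odd (a := (p : ℤ) + s) (b := s)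
    ⟨s + m, by push_cast; omega⟩

lemma alphaM_vS_eq_alphaTrunc {p : ℕ+} (hp : Odd (p : ℕ)) {M : ℤ} {S : Finset ℕ+}
    (hpM : p ≤ M) (hS : ∀ s ∈ S, (s : ℤ) + p ≤ M) :
    alphaM p (vS S) = alphaTrunc (-p) M (vS S) := by
  rw [alphaTrunc_apply]
  simp only [neg_neg, sub_neg_eq_add]
  rw [sum_Icc_int_split _ (b := p - 1) (by omega) (by omega),
    sum_Icc_int_split _ (a := p - 1 + 1) (b := p) (by omega) hpM]
  simp only [sub_add_cancel, Finset.Icc_self, Finset.sum_singleton, sub_self]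
  rw [alphaM, onBasis_vS, alphaTrunc_neg_pnat_head hp, alphaTrunc_neg_pnat_middle hp,
    alphaTrunc_neg_pnat_tail hp hS]
  abel

lemma alpha_vS_eq_alphaTrunc {n M : ℤ} (hn : Odd n) {S : Finset ℕ+} (hnM : |n| ≤ M)
    (hS : ∀ s ∈ S, (s : ℤ) + |n| ≤ M) : alpha n (vS S) = alphaTrunc n M (vS S) := by
  rcases Int.eq_zero_or_eq_pnat_or_eq_neg_pnat n with rfl | ⟨p, rfl | rfl⟩
  · exact absurd hn (by decide)
  · rw [alpha_pnat, alphaP_vS_eq_alphaTrunc (by exact_mod_cast hn) ((abs_nonneg _).trans hnM)]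
    intro s hs; have := hS s hs; rw [abs_of_pos (by positivity)] at this; omega
  · rw [alpha_neg_pnat, alphaM_vS_eq_alphaTrunc (by simpa using hn) (by simpa using hnM)]
    simpa using hS

lemma psiT_vS_eq_smul_vS (k : ℤ) {S : Finset ℕ+} {N : ℤ} (hN : 0 ≤ N)
    (hS : ∀ s ∈ S, (s : ℤ) ≤ N) :
    ∃ (r : ℝ) (T : Finset ℕ+),
      psiT k (vS S) = r • vS T ∧ ∀ t ∈ T, (t : ℤ) ≤ N + |k| := by
  have hSk : ∀ s ∈ S, (s : ℤ) ≤ N + |k| := fun s hs => by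
    have := hS s hs; have := abs_nonneg k; omega
  rcases Int.eq_zero_or_eq_pnat_or_eq_neg_pnat k with rfl | ⟨p, rfl | rfl⟩
  · exact ⟨2⁻¹ * (-1) ^ S.card, S, by simp [psiT_zero, par_vS, smul_smul], hSk⟩
  · refine ⟨if p ∈ S then 0 else aboveSign p S, insert p S, ?_, ?_⟩
    · rw [psiT_pnat, psi_vS]; split_ifs <;> simp
    · simp only [Finset.mem_insert, forall_eq_or_imp]
      exact ⟨by simp; omega, hSk⟩
  · refine ⟨if p ∈ S then (-1) ^ (p : ℕ) * (2⁻¹ * aboveSign p S) else 0, S.erase p, ?_,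
      fun t ht => hSk t (Finset.mem_of_mem_erase ht)⟩
    rw [psiT_neg_pnat, LinearMap.smul_apply, psiStar_vS]; split_ifs <;> simp [smul_smul]

theorem alpha_psiT_commutation_general (n : ℤ) (hn : Odd n) (k : ℤ) :
    alpha n ∘ₗ psiT k - psiT k ∘ₗ alpha n = psiT (k - n) := by
  refine ext_vS fun S => ?_
  obtain ⟨N, hN, hS⟩ : ∃ N : ℤ, 0 ≤ N ∧ ∀ s ∈ S, (s : ℤ) ≤ N :=
    ⟨(S.sup (fun s => (s : ℕ)) : ℕ), by positivity,
      fun s hs => by exact_mod_cast Finset.le_sup (f := fun s : ℕ+ => (s : ℕ)) hs⟩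
  obtain ⟨r, T, hT, hTN⟩ := psiT_vS_eq_smul_vS k hN hS
  have hk := abs_nonneg k
  have hn' := abs_nonneg n
  have hα {U : Finset ℕ+} (hU : ∀ u ∈ U, (u : ℤ) ≤ N + |k|) :
      alpha n (vS U) = alphaTrunc n (N + |k| + |n|) (vS U) :=
    alpha_vS_eq_alphaTrunc hn (by omega) fun u hu => by have := hU u hu; omega
  have hcomm := congr($(alphaTrunc_comp_psiT_sub hn (M := N + |k| + |n|) (k := k)
    (by have := le_abs_self k; have := neg_abs_le n; omega)
    (by have := neg_abs_le k; omega)) (vS S))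
  simp only [LinearMap.sub_apply, LinearMap.comp_apply] at hcomm ⊢
  rw [hT, map_smul, hα hTN, ← map_smul, ← hT, hα fun s hs => by have := hS s hs; omega, hcomm]

/-- `[α_n, ψ̃_k] = ψ̃_{k-n}` for every odd nonzero integer `n` and every integer `k`
(the coefficient-wise form of `[α_n, ψ(z)] = z^n ψ(z)`). -/
theorem alpha_psiT_commutation (n : ℤ) (hn : Odd n) (hn0 : n ≠ 0) (k : ℤ) :
    alpha n ∘ₗ psiT k - psiT k ∘ₗ alpha n = psiT (k - n) :=
  alpha_psiT_commutation_general n hn k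

end
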